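/- arXiv:1604.07315 — 2 statements merged into one kernel-verified Lean document; each statement's English description precedes it below -/
import Mathlib

section
/- Let (f, g) be a scalar admissible system with potential function U, let ε ∈ [0,1], and let x ∈ (0,1) be a point with g′(x) > 0. Then x is a fixed point of the single-system recursion, i.e. x = f(g(x); ε), if and only if x is a stationary point of the potential function, i.e. ∂U/∂x (x; ε) = 0. -/
open Set MeasureTheory intervalIntegral Filter Topology

/-- A scalar admissible system `(f, g)`: `f : [0,1] × [0,1] → [0,1]` (written `f x ε`),
`g : [0,1] → [0,1]`, with `f` strictly increasing in each argument on `(0,1]`,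
`g` strictly increasing on `(0,1]`, `f 0 ε = f x 0 = g 0 = 0`, and `f`, `g`
twice continuously differentiable on their domains. -/
structure ScalarAdmissible (f : ℝ → ℝ → ℝ) (g : ℝ → ℝ) : Prop where
  f_mem : ∀ x ∈ Icc (0:ℝ) 1, ∀ ε ∈ Icc (0:ℝ) 1, f x ε ∈ Icc (0:ℝ) 1
  g_mem : ∀ x ∈ Icc (0:ℝ) 1, g x ∈ Icc (0:ℝ) 1
  f_strictMono_x : ∀ ε ∈ Ioc (0:ℝ) 1, StrictMonoOn (fun x => f x ε) (Ioc (0:ℝ) 1)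
  f_strictMono_eps : ∀ x ∈ Ioc (0:ℝ) 1, StrictMonoOn (fun ε => f x ε) (Ioc (0:ℝ) 1)
  g_strictMono : StrictMonoOn g (Ioc (0:ℝ) 1)
  f_zero_x : ∀ ε ∈ Icc (0:ℝ) 1, f 0 ε = 0
  f_zero_eps : ∀ x ∈ Icc (0:ℝ) 1, f x 0 = 0
  g_zero : g 0 = 0
  f_contDiff : ContDiffOn ℝ 2 (fun p : ℝ × ℝ => f p.1 p.2) (Icc 0 1 ×ˢ Icc 0 1)
  g_contDiff : ContDiffOn ℝ 2 g (Icc (0:ℝ) 1)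

/-- `G(x) = ∫₀ˣ g(z) dz`. -/
noncomputable def bigG (g : ℝ → ℝ) (x : ℝ) : ℝ := ∫ z in (0:ℝ)..x, g z

/-- `F(x; ε) = ∫₀ˣ f(z; ε) dz`. -/
noncomputable def bigF (f : ℝ → ℝ → ℝ) (x ε : ℝ) : ℝ := ∫ z in (0:ℝ)..x, f z ε

/-- The potential function `U(x; ε) = x g(x) − G(x) − F(g(x); ε)`. -/
noncomputable def potentialU (f : ℝ → ℝ → ℝ) (g : ℝ → ℝ) (x ε : ℝ) : ℝ :=
  x * g x - bigG g x - bigF f (g x) ε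

/-- `u(ε) = sup{ x̃ ∈ [0,1] : f(g(x); ε) < x for all x ∈ (0, x̃) }`. -/
noncomputable def minUnstable (f : ℝ → ℝ → ℝ) (g : ℝ → ℝ) (ε : ℝ) : ℝ :=
  sSup {x' : ℝ | x' ∈ Icc (0:ℝ) 1 ∧ ∀ x ∈ Ioo (0:ℝ) x', f (g x) ε < x}

/-- The potential threshold
`ε* = sup{ ε ∈ [0,1] : u(ε) > 0 and min_{x ∈ [u(ε),1]} U(x; ε) > 0 }`. -/
noncomputable def potentialThreshold (f : ℝ → ℝ → ℝ) (g : ℝ → ℝ) : ℝ :=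
  sSup {ε : ℝ | ε ∈ Icc (0:ℝ) 1 ∧ 0 < minUnstable f g ε ∧
    ∀ x ∈ Icc (minUnstable f g ε) 1, 0 < potentialU f g x ε}

theorem hasDerivAt_integral_of_continuousOn_Icc {E : Type*} [NormedAddCommGroup E]
    [NormedSpace ℝ E] [CompleteSpace E] {f : ℝ → E} {a b x : ℝ}
    (hf : ContinuousOn f (Icc a b)) (hx : x ∈ Ioo a b) :
    HasDerivAt (fun y => ∫ t in a..y, f t) (f x) x :=
  integral_hasDerivAt_right
    (hf.mono (by rw [uIcc_of_le hx.1.le]; exact Icc_subset_Icc_right hx.2.le)).intervalIntegrable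
    (ContinuousOn.stronglyMeasurableAtFilter isOpen_Ioo (hf.mono Ioo_subset_Icc_self) x hx)
    (hf.continuousAt (Icc_mem_nhds hx.1 hx.2))

theorem hasDerivAt_potentialU {f : ℝ → ℝ → ℝ} {g : ℝ → ℝ} {ε x g' : ℝ}
    (hg : HasDerivAt g g' x) (hG : HasDerivAt (bigG g) (g x) x)
    (hF : HasDerivAt (fun y => bigF f y ε) (f (g x) ε) (g x)) :
    HasDerivAt (fun y => potentialU f g y ε) (g' * (x - f (g x) ε)) x := by
  have hxg : HasDerivAt (fun y => y * g y) (g x + x * g') x :=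
    ((hasDerivAt_id' x).mul hg).congr_deriv (by ring)
  exact ((hxg.sub hG).sub (hF.comp x hg)).congr_deriv (by ring)

namespace ScalarAdmissible

variable {f : ℝ → ℝ → ℝ} {g : ℝ → ℝ}

theorem g_mem_Ioo (hadm : ScalarAdmissible f g) {x : ℝ} (hx : x ∈ Ioo (0:ℝ) 1) :
    g x ∈ Ioo (0:ℝ) 1 := by
  obtain ⟨hx0, hx1⟩ := hx
  constructor
  · calc 0 ≤ g (x / 2) := (hadm.g_mem _ ⟨by linarith, by linarith⟩).1
      _ < g x := hadm.g_strictMono ⟨by linarith, by linarith⟩ ⟨hx0, hx1.le⟩ (by linarith)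
  · calc g x < g 1 := hadm.g_strictMono ⟨hx0, hx1.le⟩ ⟨one_pos, le_rfl⟩ hx1
      _ ≤ 1 := (hadm.g_mem 1 ⟨zero_le_one, le_rfl⟩).2

theorem continuousOn_f_left (hadm : ScalarAdmissible f g) {ε : ℝ} (hε : ε ∈ Icc (0:ℝ) 1) :
    ContinuousOn (fun z => f z ε) (Icc (0:ℝ) 1) :=
  hadm.f_contDiff.continuousOn.comp (continuousOn_id.prodMk continuousOn_const)
    fun _ hz => ⟨hz, hε⟩

end ScalarAdmissible

/-- `x ∈ (0,1)` with `g′(x) > 0` is a fixed point of the single-system recursion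
`x = f(g(x); ε)` iff it is a stationary point of the potential function. -/
theorem fixedPoint_iff_stationary (f : ℝ → ℝ → ℝ) (g : ℝ → ℝ)
    (hadm : ScalarAdmissible f g) (ε : ℝ) (hε : ε ∈ Icc (0:ℝ) 1)
    (x : ℝ) (hx : x ∈ Ioo (0:ℝ) 1) (hg : 0 < deriv g x) :
    x = f (g x) ε ↔ deriv (fun y => potentialU f g y ε) x = 0 := by
  have hU : HasDerivAt (fun y => potentialU f g y ε) (deriv g x * (x - f (g x) ε)) x :=
    hasDerivAt_potentialU (differentiableAt_of_deriv_ne_zero hg.ne').hasDerivAt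
      (hasDerivAt_integral_of_continuousOn_Icc hadm.g_contDiff.continuousOn hx)
      (hasDerivAt_integral_of_continuousOn_Icc (hadm.continuousOn_f_left hε) (hadm.g_mem_Ioo hx))
  rw [hU.deriv, mul_eq_zero, sub_eq_zero]
  exact ⟨Or.inr, fun h => h.resolve_left hg.ne'⟩
end

section
/- Define D(p) = p⁶ − 4p⁵ + 6p⁴ − 6p³ + 5p² − 2p + 1 and N₁(p) = p·(p⁵ − 4p⁴ + 6p³ − 5p² + 2p + 1). Then for all p ∈ [0,1]: (a) D(p) > 0; (b) D(p) − N₁(p) = (1 − p)³, so that f₁(p) := N₁(p)/D(p) = 1 − (1−p)³/D(p); (c) 0 ≤ f₁(p) ≤ 1 with f₁(0) = 0 and f₁(1) = 1; (d) f₁ is monotonically nondecreasing on [0,1]. -/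
/-!
With `q = 1 - p` the denominator is a perfect square, `D(p) = r(q)²` with `r(q) = 1 - q² + q³`,
and `D - N₁ = q³`, so `f₁(p) = 1 - q · (q / r(q))²`. On `[0, 1]` the map `q ↦ q / r(q)` is
nondecreasing, because `b r(a) - a r(b) = (b - a)(1 + ab(1 - a - b))`, and nonnegative; hence so
is `q ↦ q³ / r(q)²`, and `f₁` is nondecreasing. The bounds `0 ≤ f₁ ≤ 1` then follow from the
endpoint values.
-/

open Set

/-- Denominator of the BCJR transfer functions of the rate-2/3 recursive systematic
convolutional encoder with `G(D) = [[1, 0, 1/(1+D)], [0, 1, D/(1+D)]]`. -/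
noncomputable def Dden (p : ℝ) : ℝ :=
  p ^ 6 - 4 * p ^ 5 + 6 * p ^ 4 - 6 * p ^ 3 + 5 * p ^ 2 - 2 * p + 1

/-- Numerator of the systematic-bit transfer function. -/
noncomputable def N₁ (p : ℝ) : ℝ :=
  p * (p ^ 5 - 4 * p ^ 4 + 6 * p ^ 3 - 5 * p ^ 2 + 2 * p + 1)

/-- Extrinsic erasure-probability transfer function, for the systematic output bits,
of the BCJR decoder on the BEC, at equal input erasure probability `p`. -/
noncomputable def f₁ (p : ℝ) : ℝ := N₁ p / Dden p

lemma one_sub_sq_add_pow_three_pos {q : ℝ} (hq : 0 ≤ q) : 0 < 1 - q ^ 2 + q ^ 3 := by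
  nlinarith [sq_nonneg (q - 1), mul_nonneg hq (sq_nonneg (q - 1)), sq_nonneg q]

lemma monotoneOn_div_one_sub_sq_add_pow_three :
    MonotoneOn (fun q : ℝ => q / (1 - q ^ 2 + q ^ 3)) (Icc 0 1) := by
  intro a ⟨ha₀, ha₁⟩ b ⟨hb₀, hb₁⟩ hab
  have key : b * (1 - a ^ 2 + a ^ 3) - a * (1 - b ^ 2 + b ^ 3)
      = (b - a) * (1 + a * b * (1 - a - b)) := by ring
  have hab₁ : a * b ≤ 1 := mul_le_one₀ ha₁ hb₀ hb₁
  have hfactor : 0 ≤ 1 + a * b * (1 - a - b) := by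
    nlinarith [mul_nonneg ha₀ hb₀, mul_nonneg (mul_nonneg ha₀ hb₀) ha₀,
      mul_nonneg (mul_nonneg ha₀ hb₀) hb₀]
  rw [div_le_div_iff₀ (one_sub_sq_add_pow_three_pos ha₀) (one_sub_sq_add_pow_three_pos hb₀)]
  nlinarith [mul_nonneg (sub_nonneg.2 hab) hfactor]

lemma monotoneOn_pow_three_div_sq :
    MonotoneOn (fun q : ℝ => q ^ 3 / (1 - q ^ 2 + q ^ 3) ^ 2) (Icc 0 1) := by
  have hratio := monotoneOn_div_one_sub_sq_add_pow_three
  have hratio₀ : ∀ q ∈ Icc (0 : ℝ) 1, 0 ≤ q / (1 - q ^ 2 + q ^ 3) := fun q hq =>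
    div_nonneg hq.1 (one_sub_sq_add_pow_three_pos hq.1).le
  have hprod := (monotoneOn_id.mul hratio (fun q hq => hq.1) hratio₀).mul hratio
    (fun q hq => mul_nonneg hq.1 (hratio₀ q hq)) hratio₀
  refine hprod.congr fun q _ => ?_
  simp only [Pi.mul_apply, id, mul_assoc, ← sq, div_pow]
  ring

lemma Dden_eq_sq (p : ℝ) : Dden p = (1 - (1 - p) ^ 2 + (1 - p) ^ 3) ^ 2 := by
  unfold Dden; ring

lemma Dden_pos {p : ℝ} (hp : p ≤ 1) : 0 < Dden p := by
  rw [Dden_eq_sq]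
  exact pow_pos (one_sub_sq_add_pow_three_pos (sub_nonneg.2 hp)) 2

lemma Dden_sub_N₁ (p : ℝ) : Dden p - N₁ p = (1 - p) ^ 3 := by
  unfold Dden N₁; ring

lemma f₁_eq_one_sub {p : ℝ} (hD : Dden p ≠ 0) : f₁ p = 1 - (1 - p) ^ 3 / Dden p := by
  rw [f₁, ← Dden_sub_N₁, sub_div, div_self hD, sub_sub_cancel]

lemma monotoneOn_f₁ : MonotoneOn f₁ (Icc 0 1) := by
  intro a ⟨ha₀, ha₁⟩ b ⟨hb₀, hb₁⟩ hab
  rw [f₁_eq_one_sub (Dden_pos ha₁).ne', f₁_eq_one_sub (Dden_pos hb₁).ne', Dden_eq_sq, Dden_eq_sq]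
  have := monotoneOn_pow_three_div_sq ⟨sub_nonneg.2 hb₁, sub_le_self 1 hb₀⟩
    ⟨sub_nonneg.2 ha₁, sub_le_self 1 ha₀⟩ (sub_le_sub_left hab 1)
  simp only at this
  linarith

/-- Properties of `f₁`: (a) `D(p) > 0`; (b) `D(p) − N₁(p) = (1−p)³`, so
`f₁(p) = 1 − (1−p)³/D(p)`; (c) `0 ≤ f₁(p) ≤ 1` with `f₁(0) = 0`, `f₁(1) = 1`;
(d) `f₁` is monotonically nondecreasing on `[0,1]`. -/
theorem f₁_properties :
    (∀ p ∈ Icc (0:ℝ) 1, 0 < Dden p) ∧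
    (∀ p ∈ Icc (0:ℝ) 1, Dden p - N₁ p = (1 - p) ^ 3 ∧ f₁ p = 1 - (1 - p) ^ 3 / Dden p) ∧
    (∀ p ∈ Icc (0:ℝ) 1, 0 ≤ f₁ p ∧ f₁ p ≤ 1) ∧ f₁ 0 = 0 ∧ f₁ 1 = 1 ∧
    MonotoneOn f₁ (Icc (0:ℝ) 1) := by
  have hf₀ : f₁ 0 = 0 := by norm_num [f₁, N₁, Dden]
  have hf₁ : f₁ 1 = 1 := by norm_num [f₁, N₁, Dden]
  have h01 : (0 : ℝ) ≤ 1 := zero_le_one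
  refine ⟨fun p hp => Dden_pos hp.2,
    fun p hp => ⟨Dden_sub_N₁ p, f₁_eq_one_sub (Dden_pos hp.2).ne'⟩,
    fun p hp => ⟨?_, ?_⟩, hf₀, hf₁, monotoneOn_f₁⟩
  · exact hf₀ ▸ monotoneOn_f₁ (left_mem_Icc.2 h01) hp hp.1
  · exact hf₁ ▸ monotoneOn_f₁ hp (right_mem_Icc.2 h01) hp.2
end
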